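/- For every z ∈ ℂ and every k ∈ ℤ, the sequences s and t satisfy the three-term recurrence a_k s_{k+1}(z) + b_k s_k(z) + a_{k-1} s_{k-1}(z) = −z s_k(z) and a_k t_{k+1}(z) + b_k t_k(z) + a_{k-1} t_{k-1}(z) = −z t_k(z). -/

import Mathlib

open Complex MeasureTheory

noncomputable section

/-- Pochhammer symbol `(a)_n`. -/
def poch (a : ℂ) (n : ℕ) : ℂ := ∏ i ∈ Finset.range n, (a + i)

/-- Confluent hypergeometric function `₁F₁(a;b;z)`. -/
def hyp1F1 (a b z : ℂ) : ℂ := ∑' n : ℕ, poch a n * z ^ n / (poch b n * (n.factorial : ℂ))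

/-- Second solution `U(a;b;z)` of the confluent hypergeometric equation (principal branch). -/
def USol (a b z : ℂ) : ℂ :=
  Complex.Gamma (1 - b) / Complex.Gamma (a - b + 1) * hyp1F1 a b z
  + Complex.Gamma (b - 1) / Complex.Gamma a * z ^ (1 - b) * hyp1F1 (a - b + 1) (2 - b) z

/-- `a_k = |k + ε + 1/2 + iρ|`. -/
def coefA (ρ ε : ℝ) (k : ℤ) : ℝ := ‖(k : ℂ) + (ε : ℂ) + 1/2 + I * (ρ : ℂ)‖

/-- `b_k = 2(k + ε)`. -/
def coefB (ρ ε : ℝ) (k : ℤ) : ℝ := 2 * ((k : ℝ) + ε)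

/-- The solution `s_k(z)`. -/
def sSol (ρ ε : ℝ) (k : ℤ) (z : ℂ) : ℂ :=
  (-1 : ℂ) ^ k * ((‖Complex.Gamma ((k : ℂ) + (ε : ℂ) + 1/2 + I * ρ)‖ : ℂ) /
      Complex.Gamma ((k : ℂ) + (ε : ℂ) + 1/2 - I * ρ)) *
    hyp1F1 ((k : ℂ) + (ε : ℂ) + 1/2 + I * ρ) (1 + 2 * I * ρ) z

/-- The solution `t_k(z)`. -/
def tSol (ρ ε : ℝ) (k : ℤ) (z : ℂ) : ℂ :=
  ((‖Complex.Gamma (1/2 - (k : ℂ) - (ε : ℂ) - I * ρ)‖ : ℂ) /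
      Complex.Gamma (1/2 - (k : ℂ) - (ε : ℂ) + I * ρ)) *
    hyp1F1 (1/2 - (k : ℂ) - (ε : ℂ) - I * ρ) (1 - 2 * I * ρ) (-z)

/-- The solution `u_k(z)`, for `z ∉ (-∞,0]`. -/
def uSol (ρ ε : ℝ) (k : ℤ) (z : ℂ) : ℂ :=
  (-1 : ℂ) ^ k * (‖Complex.Gamma ((k : ℂ) + (ε : ℂ) + 1/2 + I * ρ)‖ : ℂ) *
    USol ((k : ℂ) + (ε : ℂ) + 1/2 + I * ρ) (1 + 2 * I * ρ) z

/-- The solution `v_k(z)`, for `z ∉ [0,∞)`. -/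
def vSol (ρ ε : ℝ) (k : ℤ) (z : ℂ) : ℂ :=
  (‖Complex.Gamma (1/2 - (k : ℂ) - (ε : ℂ) - I * ρ)‖ : ℂ) *
    USol (1/2 - (k : ℂ) - (ε : ℂ) - I * ρ) (1 - 2 * I * ρ) (-z)


/-! With the phase factor γ(w) = |Γ(w)| / Γ(w̄), one has `s_k(z) = (-1)^k N(w_k, z)` and
`t_k(z) = N(1 - w_k, -z)`, where `w_k = k + ε + 1/2 + iρ` and `N(w, z) = γ(w) ₁F₁(w; 1 + w - w̄; z)`;
the second parameter `b = 1 + 2i Im w` does not move when `w` is shifted by integers. The recurrence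
is then Kummer's contiguous relation `w M(w+1) + (b - 2w - z) M(w) + (w - b) M(w-1) = 0`, checked
coefficientwise on the power series, once `Γ(w+1) = w Γ(w)` and `|w|² = w w̄` are used to show
`|w| γ(w+1) = w γ(w)` and `|w-1| γ(w-1) = (w̄-1) γ(w)`; note `w - b = w̄ - 1`. -/

open ComplexConjugate

section Pochhammer

lemma poch_zero (a : ℂ) : poch a 0 = 1 := Finset.prod_range_zero _

lemma poch_succ_right (a : ℂ) (n : ℕ) : poch a (n + 1) = poch a n * (a + n) :=
  Finset.prod_range_succ _ _

lemma poch_succ_left (a : ℂ) (n : ℕ) : poch a (n + 1) = a * poch (a + 1) n := by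
  rw [poch, Finset.prod_range_succ', poch, mul_comm]
  push_cast
  simp only [add_zero, add_assoc, add_comm (1 : ℂ)]

lemma poch_ne_zero {b : ℂ} (hb : b.im ≠ 0) (n : ℕ) : poch b n ≠ 0 :=
  Finset.prod_ne_zero_iff.mpr fun i _ h => hb (by simpa using congrArg Complex.im h)

lemma norm_add_ofReal_le {b : ℂ} (hb : b.im ≠ 0) (a : ℂ) (x : ℝ) :
    ‖a + x‖ ≤ (1 + ‖a - b‖ / |b.im|) * ‖b + x‖ := by
  have him : |b.im| ≤ ‖b + x‖ := by simpa using Complex.abs_im_le_norm (b + x)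
  have hdiff : ‖a - b‖ ≤ ‖a - b‖ / |b.im| * ‖b + x‖ := by
    rw [div_mul_eq_mul_div, le_div_iff₀ (abs_pos.mpr hb)]
    exact mul_le_mul_of_nonneg_left him (norm_nonneg _)
  calc ‖a + x‖ = ‖(b + x) + (a - b)‖ := by ring_nf
    _ ≤ ‖b + x‖ + ‖a - b‖ := norm_add_le _ _
    _ ≤ (1 + ‖a - b‖ / |b.im|) * ‖b + x‖ := by linarith

lemma norm_poch_le {b : ℂ} (hb : b.im ≠ 0) (a : ℂ) (n : ℕ) :
    ‖poch a n‖ ≤ (1 + ‖a - b‖ / |b.im|) ^ n * ‖poch b n‖ := by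
  induction n with
  | zero => simp [poch_zero]
  | succ n ih =>
    rw [poch_succ_right, poch_succ_right, norm_mul, norm_mul, pow_succ,
      mul_mul_mul_comm]
    exact mul_le_mul ih (by exact_mod_cast norm_add_ofReal_le hb a n) (norm_nonneg _)
      (by positivity)

end Pochhammer

section Hyp1F1

def hyp1F1Term (a b z : ℂ) (n : ℕ) : ℂ := poch a n * z ^ n / (poch b n * (n.factorial : ℂ))

lemma hyp1F1_eq_tsum (a b z : ℂ) : hyp1F1 a b z = ∑' n, hyp1F1Term a b z n := rfl

lemma hyp1F1Term_zero (a b z : ℂ) : hyp1F1Term a b z 0 = 1 := by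
  simp [hyp1F1Term, poch_zero]

lemma norm_hyp1F1Term_le {b : ℂ} (hb : b.im ≠ 0) (a z : ℂ) (n : ℕ) :
    ‖hyp1F1Term a b z n‖ ≤ ((1 + ‖a - b‖ / |b.im|) * ‖z‖) ^ n / n.factorial := by
  have hpb : 0 < ‖poch b n‖ := norm_pos_iff.mpr (poch_ne_zero hb n)
  rw [hyp1F1Term, norm_div, norm_mul, norm_mul, norm_pow, Complex.norm_natCast, mul_pow,
    div_le_div_iff₀ (by positivity) (by positivity)]
  calc ‖poch a n‖ * ‖z‖ ^ n * n.factorial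
      ≤ (1 + ‖a - b‖ / |b.im|) ^ n * ‖poch b n‖ * ‖z‖ ^ n * n.factorial := by
        gcongr
        exact norm_poch_le hb a n
    _ = _ := by ring

lemma summable_hyp1F1Term {b : ℂ} (hb : b.im ≠ 0) (a z : ℂ) :
    Summable (hyp1F1Term a b z) :=
  Summable.of_norm_bounded (Real.summable_pow_div_factorial _) (norm_hyp1F1Term_le hb a z)

lemma hyp1F1Term_contiguous (a b z : ℂ) {n : ℕ} (hbn : poch b (n + 1) ≠ 0) :
    a * hyp1F1Term (a + 1) b z (n + 1) + (b - 2 * a) * hyp1F1Term a b z (n + 1)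
      + (a - b) * hyp1F1Term (a - 1) b z (n + 1) = z * hyp1F1Term a b z n := by
  obtain ⟨hb, hbn'⟩ := mul_ne_zero_iff.mp (poch_succ_right b n ▸ hbn)
  have hfact : (n.factorial : ℂ) ≠ 0 := Nat.cast_ne_zero.mpr n.factorial_ne_zero
  have hshift : poch (a - 1) (n + 1) = (a - 1) * poch a n := by
    rw [poch_succ_left, sub_add_cancel]
  have hshift' : a * poch (a + 1) (n + 1) = poch a n * (a + n) * (a + n + 1) := by
    rw [← poch_succ_left, poch_succ_right, poch_succ_right]
    push_cast
    ring
  simp only [hyp1F1Term]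
  rw [hshift, poch_succ_right a, poch_succ_right b, Nat.factorial_succ]
  field_simp
  push_cast
  linear_combination z ^ (n + 1) * (n.factorial : ℂ) * hshift'

theorem hyp1F1_contiguous {b : ℂ} (hb : b.im ≠ 0) (a z : ℂ) :
    a * hyp1F1 (a + 1) b z + (b - 2 * a) * hyp1F1 a b z + (a - b) * hyp1F1 (a - 1) b z
      = z * hyp1F1 a b z := by
  have hplus := (summable_hyp1F1Term hb (a + 1) z).mul_left a
  have hzero := (summable_hyp1F1Term hb a z).mul_left (b - 2 * a)
  have hminus := (summable_hyp1F1Term hb (a - 1) z).mul_left (a - b)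
  simp only [hyp1F1_eq_tsum, ← tsum_mul_left]
  rw [← hplus.tsum_add hzero, ← (hplus.add hzero).tsum_add hminus,
    ((hplus.add hzero).add hminus).tsum_eq_zero_add]
  simp only [hyp1F1Term_zero]
  rw [tsum_congr fun n => hyp1F1Term_contiguous a b z (poch_ne_zero hb (n + 1))]
  ring

end Hyp1F1

section GammaPhase

def gammaPhase (w : ℂ) : ℂ := (‖Gamma w‖ : ℂ) / Gamma (conj w)

lemma norm_mul_gammaPhase_add_one (w : ℂ) : ‖w‖ * gammaPhase (w + 1) = w * gammaPhase w := by
  rcases eq_or_ne w 0 with rfl | hw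
  · simp
  have hw' : conj w ≠ 0 := (map_ne_zero _).mpr hw
  rw [gammaPhase, gammaPhase, map_add, map_one, Gamma_add_one w hw, Gamma_add_one _ hw',
    norm_mul]
  push_cast
  calc (‖w‖ : ℂ) * (‖w‖ * ‖Gamma w‖ / (conj w * Gamma (conj w)))
      = conj w * (w * ‖Gamma w‖) / (conj w * Gamma (conj w)) := by
        rw [← mul_div_assoc, ← mul_assoc, ← sq, ← mul_conj']
        ring
    _ = w * (‖Gamma w‖ / Gamma (conj w)) := by
        rw [mul_div_mul_left _ _ hw', mul_div_assoc]

lemma conj_mul_gammaPhase_add_one (w : ℂ) :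
    conj w * gammaPhase (w + 1) = ‖w‖ * gammaPhase w := by
  rcases eq_or_ne w 0 with rfl | hw
  · simp
  have hnorm : (‖w‖ : ℂ) ≠ 0 := by exact_mod_cast norm_ne_zero_iff.mpr hw
  apply mul_left_cancel₀ hnorm
  linear_combination conj w * norm_mul_gammaPhase_add_one w + gammaPhase w * mul_conj' w

end GammaPhase

section Recurrence

def normalizedHyp1F1 (w z : ℂ) : ℂ := gammaPhase w * hyp1F1 w (1 + w - conj w) z

theorem normalizedHyp1F1_recurrence {w : ℂ} (hw : w.im ≠ 0) (z : ℂ) :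
    ‖w‖ * normalizedHyp1F1 (w + 1) z - (w + conj w - 1) * normalizedHyp1F1 w z
      + ‖w - 1‖ * normalizedHyp1F1 (w - 1) z = z * normalizedHyp1F1 w z := by
  have hb : (1 + w - conj w).im ≠ 0 := by simpa [← two_mul] using hw
  have hshift (c : ℂ) (hc : conj c = c) : 1 + (w + c) - conj (w + c) = 1 + w - conj w := by
    rw [map_add, hc]
    ring
  have hplus := norm_mul_gammaPhase_add_one w
  have hminus := conj_mul_gammaPhase_add_one (w - 1)
  rw [sub_add_cancel, map_sub, map_one] at hminus
  have hcontig := hyp1F1_contiguous hb w z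
  rw [normalizedHyp1F1, normalizedHyp1F1, normalizedHyp1F1, hshift 1 (map_one _),
    sub_eq_add_neg w 1, hshift (-1) (by simp), ← sub_eq_add_neg]
  linear_combination hyp1F1 (w + 1) (1 + w - conj w) z * hplus
    - hyp1F1 (w - 1) (1 + w - conj w) z * hminus + gammaPhase w * hcontig

end Recurrence

section Laguerre

def sParam (ρ ε : ℝ) (k : ℤ) : ℂ := (k : ℂ) + (ε : ℂ) + 1/2 + I * ρ

lemma sParam_add_one (ρ ε : ℝ) (k : ℤ) : sParam ρ ε (k + 1) = sParam ρ ε k + 1 := by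
  simp only [sParam]
  push_cast
  ring

lemma sParam_sub_one (ρ ε : ℝ) (k : ℤ) : sParam ρ ε (k - 1) = sParam ρ ε k - 1 := by
  simp only [sParam]
  push_cast
  ring

lemma conj_sParam (ρ ε : ℝ) (k : ℤ) :
    conj (sParam ρ ε k) = (k : ℂ) + (ε : ℂ) + 1/2 - I * ρ := by
  simp [sParam, sub_eq_add_neg, map_ofNat]

lemma coefB_eq (ρ ε : ℝ) (k : ℤ) :
    (coefB ρ ε k : ℂ) = sParam ρ ε k + conj (sParam ρ ε k) - 1 := by
  rw [conj_sParam, coefB, sParam]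
  push_cast
  ring

lemma sSol_eq (ρ ε : ℝ) (k : ℤ) (z : ℂ) :
    sSol ρ ε k z = (-1) ^ k * normalizedHyp1F1 (sParam ρ ε k) z := by
  rw [sSol, normalizedHyp1F1, gammaPhase, conj_sParam, mul_assoc]
  congr 4
  rw [sParam]
  ring

lemma tSol_eq (ρ ε : ℝ) (k : ℤ) (z : ℂ) :
    tSol ρ ε k z = normalizedHyp1F1 (1 - sParam ρ ε k) (-z) := by
  rw [tSol, normalizedHyp1F1, gammaPhase, map_sub, map_one, conj_sParam,
    show 1 - sParam ρ ε k = 1/2 - k - ε - I * ρ by rw [sParam]; ring]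
  congr 1
  · congr 2
    ring
  · congr 1
    ring

end Laguerre

theorem laguerre_s_t_recurrence_general (ρ ε : ℝ) (hρ : 0 < ρ)
    (z : ℂ) (k : ℤ) :
    (coefA ρ ε k : ℂ) * sSol ρ ε (k + 1) z + (coefB ρ ε k : ℂ) * sSol ρ ε k z +
        (coefA ρ ε (k - 1) : ℂ) * sSol ρ ε (k - 1) z = -z * sSol ρ ε k z ∧
    (coefA ρ ε k : ℂ) * tSol ρ ε (k + 1) z + (coefB ρ ε k : ℂ) * tSol ρ ε k z +
        (coefA ρ ε (k - 1) : ℂ) * tSol ρ ε (k - 1) z = -z * tSol ρ ε k z := by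
  have hneg : (-1 : ℂ) ≠ 0 := by norm_num
  have hw : (sParam ρ ε k).im ≠ 0 := by simpa [sParam] using hρ.ne'
  have hcoefA : (coefA ρ ε k : ℂ) = ‖sParam ρ ε k‖ := rfl
  have hcoefA' : (coefA ρ ε (k - 1) : ℂ) = ‖sParam ρ ε k - 1‖ := by rw [← sParam_sub_one]; rfl
  simp only [hcoefA, hcoefA', coefB_eq, sSol_eq, tSol_eq, sParam_add_one, sParam_sub_one,
    zpow_add_one₀ hneg, zpow_sub_one₀ hneg]
  generalize sParam ρ ε k = w at hw ⊢
  have hs := normalizedHyp1F1_recurrence hw z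
  have ht := normalizedHyp1F1_recurrence (w := 1 - w) (by simpa using hw) (-z)
  rw [norm_sub_rev, show 1 - w - 1 = -w by ring, norm_neg, map_sub, map_one,
    show 1 - w + 1 = 1 - (w - 1) by ring, show -w = 1 - (w + 1) by ring] at ht
  constructor
  · linear_combination -(-1 : ℂ) ^ k * hs
  · linear_combination ht

/-- the sequences `s_k(z)` and `t_k(z)` satisfy the three-term recurrence
`a_k f_{k+1} + b_k f_k + a_{k-1} f_{k-1} = -z f_k`. -/
theorem laguerre_s_t_recurrence (ρ ε : ℝ) (hρ : 0 < ρ) (hε : ε ∈ Set.Ico (0 : ℝ) 1)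
    (z : ℂ) (k : ℤ) :
    (coefA ρ ε k : ℂ) * sSol ρ ε (k + 1) z + (coefB ρ ε k : ℂ) * sSol ρ ε k z +
        (coefA ρ ε (k - 1) : ℂ) * sSol ρ ε (k - 1) z = -z * sSol ρ ε k z ∧
    (coefA ρ ε k : ℂ) * tSol ρ ε (k + 1) z + (coefB ρ ε k : ℂ) * tSol ρ ε k z +
        (coefA ρ ε (k - 1) : ℂ) * tSol ρ ε (k - 1) z = -z * tSol ρ ε k z :=
  laguerre_s_t_recurrence_general ρ ε hρ z k
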